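/- Let G be a finite simple graph with f(G) ≥ 2 and χ(G) = 4. Then |V(G)| ≥ 11. -/

import Mathlib

open SimpleGraph

/-- The chromatic number of `G` as a natural number. -/
noncomputable def chi {V : Type*} (G : SimpleGraph V) : ℕ := G.chromaticNumber.toNat

/-- The independence number of `G`: the largest size of a set of pairwise
non-adjacent vertices. -/
noncomputable def indepNum {V : Type*} (G : SimpleGraph V) : ℕ :=
  sSup {n | ∃ s : Finset V, s.card = n ∧ ∀ u ∈ s, ∀ v ∈ s, u ≠ v → ¬ G.Adj u v}

/-- The join `G + H` of two graphs: all edges of `G` and `H` together with all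
edges between the two vertex sets. -/
def SimpleGraph.join {α β : Type*} (G : SimpleGraph α) (H : SimpleGraph β) :
    SimpleGraph (α ⊕ β) where
  Adj x y := match x, y with
    | Sum.inl a, Sum.inl b => G.Adj a b
    | Sum.inr a, Sum.inr b => H.Adj a b
    | Sum.inl _, Sum.inr _ => True
    | Sum.inr _, Sum.inl _ => True
  symm := by refine ⟨?_⟩; rintro (a | a) (b | b) h <;> first | trivial | exact G.adj_symm h | exact H.adj_symm h
  loopless := by refine ⟨?_⟩; rintro (a | a) h <;> first | exact G.irrefl h | exact H.irrefl h

/-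
Since the clique number is at most two, `G` is triangle-free, and it suffices to show that a
triangle-free graph on at most ten vertices is 3-colourable. A vertex with at most two neighbours
can be coloured last, so we may assume minimum degree at least three. Then some independent set
`S` leaves at most six vertices `T`: a neighbourhood or, in a cubic graph on ten vertices, a vertex
together with an independent triple among its six non-neighbours (`R(3,3) = 6`). Give `S` the
third colour. A triangle-free graph on at most six vertices without a 5-cycle is bipartite, so it
remains to treat a 5-cycle `C` in `T`. Every vertex of `S` has at least three neighbours in `T`,
at most two of them on `C`; hence `T = C + w` and `w` is adjacent to all of `S`. As `|S| ≤ 4`,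
some vertex `c` of `C` is not adjacent to `w` while no vertex of `S` sees both neighbours of `c`
on `C`. Then `{w, c}` is independent and the rest is `S` plus an induced path on four vertices,
which is bipartite.
-/

open Finset

namespace SimpleGraph

variable {V : Type*} {G : SimpleGraph V} {k : ℕ} {s t : Finset V}

def ColorableOn (G : SimpleGraph V) (k : ℕ) (s : Finset V) : Prop :=
  ∃ f : V → Fin k, ∀ x ∈ s, ∀ y ∈ s, G.Adj x y → f x ≠ f y

theorem ColorableOn.colorable [Fintype V] (h : G.ColorableOn k univ) : G.Colorable k :=
  let ⟨f, hf⟩ := h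
  ⟨Coloring.mk f fun hxy => hf _ (mem_univ _) _ (mem_univ _) hxy⟩

theorem colorableOn_one_of_isIndepSet (h : G.IsIndepSet (s : Set V)) : G.ColorableOn 1 s :=
  ⟨fun _ => 0, fun _ hx _ hy hxy => (h hx hy (G.ne_of_adj hxy) hxy).elim⟩

theorem ColorableOn.succ_of_isIndepSet [DecidableEq V] {I : Finset V}
    (hI : G.IsIndepSet (I : Set V)) (h : G.ColorableOn k (s \ I)) : G.ColorableOn (k + 1) s := by
  obtain ⟨f, hf⟩ := h
  refine ⟨fun x => if x ∈ I then Fin.last k else (f x).castSucc, fun x hx y hy hxy => ?_⟩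
  by_cases hxI : x ∈ I <;> by_cases hyI : y ∈ I <;> simp only [hxI, hyI, if_true, if_false]
  · exact (hI hxI hyI (G.ne_of_adj hxy) hxy).elim
  · exact (Fin.castSucc_lt_last _).ne'
  · exact (Fin.castSucc_lt_last _).ne
  · exact fun h => hf x (mem_sdiff.2 ⟨hx, hxI⟩) y (mem_sdiff.2 ⟨hy, hyI⟩) hxy
      (Fin.castSucc_injective _ h)

section Decidable

variable [DecidableEq V] [DecidableRel G.Adj]

theorem ColorableOn.of_erase {v : V} (hv : #{y ∈ s | G.Adj v y} < k)
    (h : G.ColorableOn k (s.erase v)) : G.ColorableOn k s := by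
  obtain ⟨f, hf⟩ := h
  obtain ⟨c, -, hc⟩ := exists_mem_notMem_of_card_lt_card
    (card_image_le.trans_lt (hv.trans_eq (card_fin k).symm) :
      #({y ∈ s | G.Adj v y}.image f) < #(univ : Finset (Fin k)))
  have hcv : ∀ y ∈ s, G.Adj v y → c ≠ f y := fun y hy hvy h =>
    hc (mem_image.2 ⟨y, mem_filter.2 ⟨hy, hvy⟩, h.symm⟩)
  refine ⟨Function.update f v c, fun x hx y hy hxy => ?_⟩
  obtain rfl | hxv := eq_or_ne v x <;> obtain rfl | hyv := eq_or_ne v y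
  · exact (G.irrefl hxy).elim
  · simpa [hyv.symm] using hcv y hy hxy
  · simpa [hxv.symm] using (hcv x hx hxy.symm).symm
  · simpa [hxv.symm, hyv.symm] using
      hf x (mem_erase.2 ⟨hxv.symm, hx⟩) y (mem_erase.2 ⟨hyv.symm, hy⟩) hxy

theorem colorableOn_of_forall_subset_le_degree
    (h : ∀ t ⊆ s, (∀ v ∈ t, k ≤ #{y ∈ t | G.Adj v y}) → G.ColorableOn k t) :
    G.ColorableOn k s := by
  induction s using Finset.strongInduction with
  | H s ih =>
    by_cases hlow : ∃ v ∈ s, #{y ∈ s | G.Adj v y} < k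
    · obtain ⟨v, hv, hvk⟩ := hlow
      exact (ih _ (erase_ssubset hv) fun t hts => h t (hts.trans (erase_subset v s))).of_erase hvk
    · push Not at hlow
      exact h s subset_rfl hlow

end Decidable

theorem CliqueFree.not_adj_of_adj_of_adj (hG : G.CliqueFree 3) {u x y : V} (hx : G.Adj u x)
    (hy : G.Adj u y) : ¬G.Adj x y :=
  fun hxy => isIndepSet_neighborSet_of_triangleFree G hG u hx hy (G.ne_of_adj hxy) hxy

theorem CliqueFree.isIndepSet_filter_adj [DecidableRel G.Adj] (hG : G.CliqueFree 3)
    (s : Finset V) (u : V) : G.IsIndepSet (↑({y ∈ s | G.Adj u y} : Finset V) : Set V) :=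
  Set.Pairwise.mono (fun _ hy => (mem_filter.1 (mem_coe.1 hy)).2)
    (isIndepSet_neighborSet_of_triangleFree G hG u)

/-- A closed walk of length five inside `s`. In a triangle-free graph it is an induced 5-cycle
(`CliqueFree.fiveCycle_injective`, `CliqueFree.fiveCycle_induced`). -/
def HasFiveCycleIn (G : SimpleGraph V) (s : Finset V) : Prop :=
  ∃ c : Fin 5 → V, (∀ i, c i ∈ s) ∧ ∀ i, G.Adj (c i) (c (i + 1))

theorem hasFiveCycleIn_of_adj {a b c d e : V} (ha : a ∈ s) (hb : b ∈ s) (hc : c ∈ s)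
    (hd : d ∈ s) (he : e ∈ s) (hab : G.Adj a b) (hbc : G.Adj b c) (hcd : G.Adj c d)
    (hde : G.Adj d e) (hea : G.Adj e a) : G.HasFiveCycleIn s :=
  ⟨![a, b, c, d, e], fun i => by fin_cases i <;> assumption,
    fun i => by fin_cases i <;> assumption⟩

namespace CliqueFree

variable (hG : G.CliqueFree 3) {c : Fin 5 → V} (hc : ∀ i, G.Adj (c i) (c (i + 1)))
include hG hc

theorem fiveCycle_induced {i j : Fin 5} (h : G.Adj (c i) (c j)) : j = i + 1 ∨ i = j + 1 := by
  have hchord : ∀ i, ¬G.Adj (c i) (c (i + 1 + 1)) := fun i =>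
    hG.not_adj_of_adj_of_adj (hc i).symm (hc (i + 1))
  have hcases : ∀ i j : Fin 5,
      j = i ∨ j = i + 1 ∨ i = j + 1 ∨ j = i + 1 + 1 ∨ i = j + 1 + 1 := by
    decide
  rcases hcases i j with rfl | hj | hi | rfl | rfl
  · exact (G.irrefl h).elim
  · exact .inl hj
  · exact .inr hi
  · exact (hchord i h).elim
  · exact (hchord j h.symm).elim

theorem fiveCycle_injective : Function.Injective c := by
  intro i j hij
  by_contra hne
  have h₁ := hG.fiveCycle_induced hc (hij ▸ (hc i).symm : G.Adj (c (i + 1)) (c j))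
  have h₂ := hG.fiveCycle_induced hc (hij ▸ hc j : G.Adj (c i) (c (j + 1)))
  have key : ∀ i j : Fin 5, i ≠ j → j = i + 1 + 1 ∨ i + 1 = j + 1 →
      j + 1 = i + 1 ∨ i = j + 1 + 1 → False := by
    decide
  exact key i j hne h₁ h₂

theorem card_fiveCycle_adj_le_two [DecidableRel G.Adj] (x : V) :
    #{i | G.Adj x (c i)} ≤ 2 := by
  by_contra! h
  have hconsec : ∀ t : Finset (Fin 5), 2 < #t → ∃ i ∈ t, i + 1 ∈ t := by decide
  obtain ⟨i, hi, hi'⟩ := hconsec _ h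
  exact hG.not_adj_of_adj_of_adj (mem_filter.1 hi).2 (mem_filter.1 hi').2 (hc i)

theorem exists_fiveCycle_rotation [DecidableRel G.Adj] {S : Finset V} (hS : #S < 5) {w : V}
    (hw : ∀ x ∈ S, G.Adj x w) :
    ∃ r, ¬G.Adj w (c r) ∧ ∀ x ∈ S, ¬(G.Adj x (c (r + 1)) ∧ G.Adj x (c (r + 4))) := by
  by_cases hwc : ∃ k, G.Adj w (c k)
  · obtain ⟨k, hk⟩ := hwc
    have hk4 : ∀ k : Fin 5, k + 1 + 4 = k := by decide
    refine ⟨k + 1, hG.not_adj_of_adj_of_adj hk.symm (hc k), fun x hx ⟨_, hxk⟩ => ?_⟩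
    exact hG.not_adj_of_adj_of_adj (hw x hx).symm hk (hk4 k ▸ hxk)
  · -- Otherwise each rotation is blocked by a vertex of `S`, and these five vertices are distinct
    -- because each of them sees at most two vertices of the cycle.
    push Not at hwc
    by_contra! hr
    choose! g hgS hg using fun r => hr r (hwc r)
    have hinj : Set.InjOn g (univ : Finset (Fin 5)) := by
      intro r _ r' _ hrr'
      by_contra hne
      have hsub : ({r + 1, r + 4, r' + 1, r' + 4} : Finset (Fin 5)) ⊆
          ({i | G.Adj (g r) (c i)} : Finset (Fin 5)) := by
        intro i hi
        simp only [mem_insert, mem_singleton] at hi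
        simp only [mem_filter, mem_univ, true_and]
        rcases hi with rfl | rfl | rfl | rfl
        exacts [(hg r).1, (hg r).2, hrr' ▸ (hg r').1, hrr' ▸ (hg r').2]
      have hthree : ∀ r r' : Fin 5, r ≠ r' →
          2 < #({r + 1, r + 4, r' + 1, r' + 4} : Finset (Fin 5)) := by
        decide
      exact (hthree r r' hne).not_ge
        ((card_le_card hsub).trans (hG.card_fiveCycle_adj_le_two hc _))
    have := card_le_card_of_injOn g (fun r _ => hgS r) hinj
    rw [card_univ, Fintype.card_fin] at this
    omega

end CliqueFree

section Decidable

variable [DecidableEq V] [DecidableRel G.Adj]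

theorem CliqueFree.colorableOn_two_of_no_common_neighbor (hG : G.CliqueFree 3) {u z : V}
    (hu : u ∈ s) (hz : z ∈ s) (huz : u ≠ z) (hadj : ¬G.Adj u z)
    (hcommon : ∀ y ∈ s, G.Adj u y → ¬G.Adj z y)
    (hcard : #s ≤ #{y ∈ s | G.Adj u y} + #{y ∈ s | G.Adj z y} + 2) : G.ColorableOn 2 s := by
  set I := insert u {y ∈ s | G.Adj z y}
  set J := insert z {y ∈ s | G.Adj u y}
  have hI : G.IsIndepSet (I : Set V) := by
    rw [coe_insert]
    refine Set.pairwise_insert.2 ⟨hG.isIndepSet_filter_adj s z, fun y hy _ => ?_⟩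
    obtain ⟨hys, hzy⟩ := mem_filter.1 hy
    exact ⟨fun huy => hcommon y hys huy hzy, fun hyu => hcommon y hys hyu.symm hzy⟩
  have hJ : G.IsIndepSet (J : Set V) := by
    rw [coe_insert]
    refine Set.pairwise_insert.2 ⟨hG.isIndepSet_filter_adj s u, fun y hy _ => ?_⟩
    obtain ⟨hys, huy⟩ := mem_filter.1 hy
    exact ⟨hcommon y hys huy, fun hyz => hcommon y hys huy hyz.symm⟩
  have hdisj : Disjoint I J := by
    simp only [I, J, disjoint_insert_left, disjoint_insert_right, mem_insert, mem_filter,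
      SimpleGraph.irrefl, and_false, or_false, huz.symm, not_false_eq_true, true_and]
    exact disjoint_filter.2 fun y hys hzy huy => hcommon y hys huy hzy
  have hIJ : I ∪ J = s := by
    refine eq_of_subset_of_card_le (union_subset (insert_subset hu (filter_subset _ _))
      (insert_subset hz (filter_subset _ _))) ?_
    rw [card_union_of_disjoint hdisj, card_insert_of_notMem, card_insert_of_notMem]
    · omega
    · exact fun h => hadj (mem_filter.1 h).2
    · exact fun h => hadj (mem_filter.1 h).2.symm
  refine ColorableOn.succ_of_isIndepSet hI
    (colorableOn_one_of_isIndepSet (Set.Pairwise.mono ?_ hJ))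
  intro y hy
  rw [mem_coe, mem_sdiff, ← hIJ, mem_union] at hy
  exact hy.1.resolve_left hy.2

theorem CliqueFree.colorableOn_two_of_card_le_six (hG : G.CliqueFree 3) (hs : #s ≤ 6)
    (hC : ¬G.HasFiveCycleIn s) : G.ColorableOn 2 s := by
  refine colorableOn_of_forall_subset_le_degree fun t hts hdeg => ?_
  obtain rfl | ⟨u, hu⟩ := t.eq_empty_or_nonempty
  · exact ⟨0, by simp⟩
  -- Either some `z` is at distance at least three from `u`, or every non-neighbour of `u` has a
  -- common neighbour with `u`, and then an edge between two of them closes a 5-cycle.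
  by_cases hfar : ∃ z ∈ t, u ≠ z ∧ ¬G.Adj u z ∧ ∀ y ∈ t, G.Adj u y → ¬G.Adj z y
  · obtain ⟨z, hz, huz, hadj, hcommon⟩ := hfar
    have := card_le_card hts
    have := hdeg u hu
    have := hdeg z hz
    exact hG.colorableOn_two_of_no_common_neighbor hu hz huz hadj hcommon (by omega)
  push Not at hfar
  refine ColorableOn.succ_of_isIndepSet (hG.isIndepSet_filter_adj t u)
    (colorableOn_one_of_isIndepSet fun y hy z hz _ hyz => ?_)
  rw [mem_coe, ← filter_not, mem_filter] at hy hz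
  obtain ⟨x, hx, hux, hyx⟩ := hfar y hy.1 (by rintro rfl; exact hz.2 hyz) hy.2
  obtain ⟨x', hx', hux', hzx'⟩ := hfar z hz.1 (by rintro rfl; exact hy.2 hyz.symm) hz.2
  exact hC (hasFiveCycleIn_of_adj (hts hu) (hts hx) (hts hy.1) (hts hz.1) (hts hx') hux hyx.symm
    hyz hzx' hux'.symm)

theorem CliqueFree.exists_isIndepSet_card_three (hG : G.CliqueFree 3) (hs : 6 ≤ #s) :
    ∃ I ⊆ s, #I = 3 ∧ G.IsIndepSet (I : Set V) := by
  obtain ⟨u, hu⟩ := card_pos.1 (by omega : 0 < #s)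
  by_cases hN : 3 ≤ #{y ∈ s | G.Adj u y}
  · obtain ⟨I, hI, hI3⟩ := exists_subset_card_eq hN
    exact ⟨I, hI.trans (filter_subset _ _), hI3,
      Set.Pairwise.mono (coe_subset.2 hI) (hG.isIndepSet_filter_adj s u)⟩
  have hB : 3 ≤ #{y ∈ s.erase u | ¬G.Adj u y} := by
    have := card_filter_add_card_filter_not (s := s.erase u) (fun y => G.Adj u y)
    have := card_le_card (filter_subset_filter (fun y => G.Adj u y) (erase_subset u s))
    have := card_erase_of_mem hu
    omega
  set B := {y ∈ s.erase u | ¬G.Adj u y}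
  by_cases hpair : ∃ x ∈ B, ∃ y ∈ B, x ≠ y ∧ ¬G.Adj x y
  · obtain ⟨x, hx, y, hy, hxy, hadj⟩ := hpair
    simp only [B, mem_filter, mem_erase] at hx hy
    refine ⟨{u, x, y}, ?_,
      card_eq_three.2 ⟨u, x, y, hx.1.1.symm, hy.1.1.symm, hxy, rfl⟩, ?_⟩
    · simp [insert_subset_iff, hu, hx.1.2, hy.1.2]
    · simp [Set.pairwise_insert, G.adj_comm _ u, G.adj_comm y x, hx.2, hy.2, hadj]
  · push Not at hpair
    obtain ⟨K, hK, hK3⟩ := exists_subset_card_eq hB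
    exact (hG K ⟨fun x hx y hy hxy => hpair x (hK hx) y (hK hy) hxy, hK3⟩).elim

theorem CliqueFree.exists_isIndepSet_le_card_add_six (hG : G.CliqueFree 3) (hs : #s ≤ 10)
    (hdeg : ∀ v ∈ s, 3 ≤ #{y ∈ s | G.Adj v y}) (hne : s.Nonempty) :
    ∃ S ⊆ s, S.Nonempty ∧ G.IsIndepSet (S : Set V) ∧ #s ≤ #S + 6 := by
  by_cases hbig : ∃ u ∈ s, #s ≤ #{y ∈ s | G.Adj u y} + 6
  · obtain ⟨u, hu, hbig⟩ := hbig
    exact ⟨_, filter_subset _ _, card_pos.1 (by have := hdeg u hu; omega),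
      hG.isIndepSet_filter_adj s u, hbig⟩
  push Not at hbig
  obtain ⟨v, hv⟩ := hne
  have hR : 6 ≤ #{y ∈ s.erase v | ¬G.Adj v y} := by
    have := card_filter_add_card_filter_not (s := s.erase v) (fun y => G.Adj v y)
    have := card_le_card (filter_subset_filter (fun y => G.Adj v y) (erase_subset v s))
    have := card_erase_of_mem hv
    have := hbig v hv
    have := hdeg v hv
    omega
  obtain ⟨I, hIR, hI3, hI⟩ := hG.exists_isIndepSet_card_three hR
  have hIs : ∀ y ∈ I, y ∈ s ∧ y ≠ v ∧ ¬G.Adj v y := fun y hy => by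
    have := hIR hy
    simp only [mem_filter, mem_erase] at this
    exact ⟨this.1.2, this.1.1, this.2⟩
  refine ⟨insert v I, insert_subset hv fun y hy => (hIs y hy).1, insert_nonempty v I, ?_, ?_⟩
  · rw [coe_insert]
    exact Set.pairwise_insert.2
      ⟨hI, fun y hy _ => ⟨(hIs y hy).2.2, fun h => (hIs y hy).2.2 h.symm⟩⟩
  · rw [card_insert_of_notMem fun h => (hIs v h).2.1 rfl]
    have := hbig v hv
    have := hdeg v hv
    omega

theorem CliqueFree.colorableOn_two_of_subset_path (hG : G.CliqueFree 3) {S A : Finset V}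
    {a b c d : V} (hS : G.IsIndepSet (S : Set V)) (hA : A ⊆ {a, b, c, d} ∪ S)
    (hab : G.Adj a b) (hbc : G.Adj b c) (hcd : G.Adj c d) (hac : ¬G.Adj a c)
    (hSad : ∀ x ∈ S, ¬(G.Adj x a ∧ G.Adj x d)) : G.ColorableOn 2 A := by
  have hA' : ∀ y ∈ A, y = a ∨ y = b ∨ y = c ∨ y = d ∨ y ∈ S := fun y hy => by
    simpa using hA hy
  have hcross : ∀ y ∈ A, ∀ z ∈ A, G.Adj y a → G.Adj z c → ¬G.Adj y z := by
    intro y hy z hz hya hzc hyz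
    rcases hA' y hy with rfl | rfl | rfl | rfl | hyS
    · exact G.irrefl hya
    · exact hG.not_adj_of_adj_of_adj hbc.symm hzc.symm hyz
    · exact hac hya.symm
    · exact hG.not_adj_of_adj_of_adj hcd hzc.symm hyz
    rcases hA' z hz with rfl | rfl | rfl | rfl | hzS
    · exact hac hzc
    · exact hG.not_adj_of_adj_of_adj hya.symm hab hyz
    · exact G.irrefl hzc
    · exact hSad y hyS ⟨hya, hyz⟩
    · exact hS hyS hzS (G.ne_of_adj hyz) hyz
  have hfar : ∀ y ∈ A, ¬(G.Adj y a ∨ G.Adj y c) → y ∈ S ∨ y = a ∨ y = c := by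
    intro y hy hyn
    rcases hA' y hy with rfl | rfl | rfl | rfl | hyS
    exacts [.inr (.inl rfl), (hyn (.inl hab.symm)).elim, .inr (.inr rfl),
      (hyn (.inr hcd.symm)).elim, .inl hyS]
  refine ColorableOn.succ_of_isIndepSet (I := {y ∈ A | G.Adj y a ∨ G.Adj y c})
    (fun y hy z hz _ hyz => ?_) (colorableOn_one_of_isIndepSet fun y hy z hz _ hyz => ?_)
  · obtain ⟨hyA, hy⟩ := mem_filter.1 hy
    obtain ⟨hzA, hz⟩ := mem_filter.1 hz
    rcases hy with hya | hyc <;> rcases hz with hza | hzc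
    · exact hG.not_adj_of_adj_of_adj hya.symm hza.symm hyz
    · exact hcross y hyA z hzA hya hzc hyz
    · exact hcross z hzA y hyA hza hyc hyz.symm
    · exact hG.not_adj_of_adj_of_adj hyc.symm hzc.symm hyz
  · rw [mem_coe, ← filter_not, mem_filter] at hy hz
    obtain ⟨hyA, hyn⟩ := hy
    obtain ⟨hzA, hzn⟩ := hz
    rcases hfar y hyA hyn with hyS | rfl | rfl
    · rcases hfar z hzA hzn with hzS | rfl | rfl
      · exact hS hyS hzS (G.ne_of_adj hyz) hyz
      · exact hyn (.inl hyz)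
      · exact hyn (.inr hyz)
    · exact hzn (.inl hyz.symm)
    · exact hzn (.inr hyz.symm)

theorem CliqueFree.colorableOn_three_of_subset_fiveCycle (hG : G.CliqueFree 3) {S : Finset V}
    (hS : G.IsIndepSet (S : Set V)) {c : Fin 5 → V} (hc : ∀ i, G.Adj (c i) (c (i + 1))) {w : V}
    (ht : t ⊆ S ∪ insert w (univ.image c)) {r : Fin 5} (hwr : ¬G.Adj w (c r))
    (hr : ∀ x ∈ S, ¬(G.Adj x (c (r + 1)) ∧ G.Adj x (c (r + 4)))) : G.ColorableOn 3 t := by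
  have hsucc : ∀ r : Fin 5, r + 1 + 1 = r + 2 ∧ r + 2 + 1 = r + 3 ∧ r + 3 + 1 = r + 4 := by
    decide
  refine ColorableOn.succ_of_isIndepSet (I := {w, c r}) ?_
    (hG.colorableOn_two_of_subset_path hS ?_ ((hsucc r).1 ▸ hc (r + 1))
      ((hsucc r).2.1 ▸ hc (r + 2)) ((hsucc r).2.2 ▸ hc (r + 3)) ?_ hr)
  · rw [coe_pair]
    exact Set.pairwise_pair.2 fun _ => ⟨hwr, fun h => hwr h.symm⟩
  · intro y hy
    simp only [mem_sdiff, mem_insert, mem_singleton, not_or] at hy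
    obtain ⟨hyt, hyw, hyr⟩ := hy
    rcases mem_union.1 (ht hyt) with hyS | hy
    · exact mem_union_right _ hyS
    obtain ⟨i, -, rfl⟩ := mem_image.1 ((mem_insert.1 hy).resolve_left hyw)
    have hother : ∀ i r : Fin 5, i ≠ r →
        i = r + 1 ∨ i = r + 2 ∨ i = r + 3 ∨ i = r + 4 := by
      decide
    apply mem_union_left
    rcases hother i r (fun h => hyr (h ▸ rfl)) with rfl | rfl | rfl | rfl <;> simp
  · have hchord : ∀ r : Fin 5, ¬(r + 3 = r + 1 + 1 ∨ r + 1 = r + 3 + 1) := by decide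
    exact fun h => hchord r (hG.fiveCycle_induced hc h)

theorem CliqueFree.colorableOn_three_of_hasFiveCycleIn (hG : G.CliqueFree 3) {S : Finset V}
    (hSt : S ⊆ t) (hS : G.IsIndepSet (S : Set V)) (hSne : S.Nonempty) (ht : #t ≤ 10)
    (htS : #t ≤ #S + 6) (hdeg : ∀ x ∈ S, 3 ≤ #{y ∈ t | G.Adj x y})
    (hC : G.HasFiveCycleIn (t \ S)) : G.ColorableOn 3 t := by
  obtain ⟨c, hcT, hc⟩ := hC
  set T := t \ S
  set C := univ.image c
  have hCT : C ⊆ T := image_subset_iff.2 fun i _ => hcT i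
  have hC5 : #C = 5 := by
    rw [card_image_of_injective _ (hG.fiveCycle_injective hc), card_univ, Fintype.card_fin]
  have hTS : #T + #S = #t := card_sdiff_add_card_eq_card hSt
  -- A vertex of `S` has at least three neighbours in `T`, at most two of them on the cycle.
  have hout : ∀ x ∈ S, ∃ w ∈ T \ C, G.Adj x w := by
    intro x hx
    by_contra! hno
    have hsub : {y ∈ t | G.Adj x y} ⊆ ({i | G.Adj x (c i)} : Finset (Fin 5)).image c := by
      intro y hy
      obtain ⟨hyt, hxy⟩ := mem_filter.1 hy
      have hyT : y ∈ T := mem_sdiff.2 ⟨hyt, fun hyS => hS hx hyS (G.ne_of_adj hxy) hxy⟩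
      by_cases hyC : y ∈ C
      · obtain ⟨i, -, rfl⟩ := mem_image.1 hyC
        exact mem_image_of_mem c (mem_filter.2 ⟨mem_univ _, hxy⟩)
      · exact (hno y (mem_sdiff.2 ⟨hyT, hyC⟩) hxy).elim
    have := (card_le_card hsub).trans (card_image_le.trans (hG.card_fiveCycle_adj_le_two hc x))
    have := hdeg x hx
    omega
  obtain ⟨x₀, hx₀⟩ := hSne
  obtain ⟨w, hw, -⟩ := hout x₀ hx₀
  have hTC : #(T \ C) = #T - 5 := by rw [card_sdiff_of_subset hCT, hC5]
  have hw₁ : 0 < #(T \ C) := card_pos.2 ⟨w, hw⟩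
  have hTw : ∀ y ∈ T \ C, y = w := fun y hy => card_le_one.1 (by omega) y hy w hw
  have hxw : ∀ x ∈ S, G.Adj x w := fun x hx => by
    obtain ⟨w', hw', hxw'⟩ := hout x hx
    rwa [hTw w' hw'] at hxw'
  obtain ⟨r, hwr, hr⟩ := hG.exists_fiveCycle_rotation hc (by omega) hxw
  refine hG.colorableOn_three_of_subset_fiveCycle hS hc (fun y hyt => ?_) hwr hr
  by_cases hyS : y ∈ S
  · exact mem_union_left _ hyS
  by_cases hyC : y ∈ C
  · exact mem_union_right _ (mem_insert_of_mem hyC)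
  · rw [hTw y (mem_sdiff.2 ⟨mem_sdiff.2 ⟨hyt, hyS⟩, hyC⟩)]
    exact mem_union_right _ (mem_insert_self w C)

theorem CliqueFree.colorableOn_three_of_card_le_ten (hG : G.CliqueFree 3) (hs : #s ≤ 10) :
    G.ColorableOn 3 s := by
  refine colorableOn_of_forall_subset_le_degree fun t hts hdeg => ?_
  have ht : #t ≤ 10 := (card_le_card hts).trans hs
  obtain rfl | htne := t.eq_empty_or_nonempty
  · exact ⟨0, by simp⟩
  obtain ⟨S, hSt, hSne, hS, htS⟩ := hG.exists_isIndepSet_le_card_add_six ht hdeg htne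
  by_cases hC : G.HasFiveCycleIn (t \ S)
  · exact hG.colorableOn_three_of_hasFiveCycleIn hSt hS hSne ht htS
      (fun x hx => hdeg x (hSt hx)) hC
  · refine ColorableOn.succ_of_isIndepSet hS (hG.colorableOn_two_of_card_le_six ?_ hC)
    rw [card_sdiff_of_subset hSt]
    omega

end Decidable

end SimpleGraph

theorem statement_4 {V : Type} [Fintype V] (G : SimpleGraph V)
    (hf : G.cliqueNum + 2 ≤ chi G) (hchi : chi G = 4) :
    11 ≤ Fintype.card V := by
  classical
  by_contra! hV
  have hG : G.CliqueFree 3 := fun t ht => by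
    have := ht.isClique.card_le_cliqueNum
    have := ht.card_eq
    omega
  have h3 : G.Colorable 3 :=
    (hG.colorableOn_three_of_card_le_ten (s := univ) (by rw [card_univ]; omega)).colorable
  have : chi G ≤ 3 := ENat.toNat_le_toNat h3.chromaticNumber_le (by simp)
  omega
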